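/- arXiv:2601.00104 — 4 statements merged into one kernel-verified Lean document; each statement's English description precedes it below -/
import Mathlib

section
/- Let 2 ≤ s ≤ r and let H be an r-uniform hypergraph. If e is an edge of H^(s) and F is the unique copy of K_r^s contained in H^(s) having e among its edges, then V(F) is an edge of H. -/
open scoped Classical

noncomputable section

/-- A (finite) hypergraph: a finite vertex set together with a finite
set of edges, each edge being a subset of the vertex set. -/
structure FinHypergraph (V : Type*) where
  verts : Finset V
  edges : Finset (Finset V)
  edge_sub : ∀ e ∈ edges, e ⊆ verts

namespace FinHypergraph

variable {V : Type*} [DecidableEq V]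

/-- `H` is `r`-uniform if every edge has exactly `r` vertices. -/
def IsUniform (H : FinHypergraph V) (r : ℕ) : Prop :=
  ∀ e ∈ H.edges, e.card = r

/-- The closed neighbourhood `N_H[D]` of a set `D` of vertices. -/
def closedNbhd (H : FinHypergraph V) (D : Finset V) : Finset V :=
  D ∪ H.verts.filter (fun w => ∃ e ∈ H.edges, w ∈ e ∧ ∃ v ∈ D, v ∈ e)

/-- The `s`-th shadow hypergraph `H^(s)`: same vertices, edges are all
`s`-element subsets of edges of `H`. -/
def shadow (H : FinHypergraph V) (s : ℕ) : FinHypergraph V where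
  verts := H.verts
  edges := H.edges.biUnion (fun e => e.powersetCard s)
  edge_sub := by
    intro a ha
    rw [Finset.mem_biUnion] at ha
    obtain ⟨e, he, hae⟩ := ha
    exact (Finset.mem_powersetCard.mp hae).1.trans (H.edge_sub e he)

/-- The subhypergraph of `H` induced by a vertex set `X`. -/
def induce (H : FinHypergraph V) (X : Finset V) : FinHypergraph V where
  verts := X
  edges := H.edges.filter (fun e => e ⊆ X)
  edge_sub := fun _ he => (Finset.mem_filter.mp he).2

/-- `H` contains a copy of `K_k^r`, the complete `r`-uniform hypergraph on
`k` vertices: a `k`-set of vertices all of whose `r`-subsets are edges. -/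
def HasCliqueCopy (H : FinHypergraph V) (k r : ℕ) : Prop :=
  ∃ S : Finset V, S ⊆ H.verts ∧ S.card = k ∧ ∀ A ∈ S.powersetCard r, A ∈ H.edges

/-- `D` is a `K_k^r`-isolating set of `H`: deleting `N_H[D]` leaves no copy of `K_k^r`. -/
def IsIsolating (H : FinHypergraph V) (k r : ℕ) (D : Finset V) : Prop :=
  D ⊆ H.verts ∧ ¬ (H.induce (H.verts \ H.closedNbhd D)).HasCliqueCopy k r

/-- `ι(H, K_k^r)`: the minimum size of a `K_k^r`-isolating set of `H`. -/
def iso (H : FinHypergraph V) (k r : ℕ) : ℕ :=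
  sInf {n | ∃ D : Finset V, H.IsIsolating k r D ∧ D.card = n}

/-- `D` is a dominating set of `H`. -/
def IsDominating (H : FinHypergraph V) (D : Finset V) : Prop :=
  D ⊆ H.verts ∧ H.verts ⊆ H.closedNbhd D

/-- The domination number `γ(H)`. -/
def domNum (H : FinHypergraph V) : ℕ :=
  sInf {n | ∃ D : Finset V, H.IsDominating D ∧ D.card = n}

/-- Two vertices are related if they lie in a common edge. -/
def edgeRel (H : FinHypergraph V) (v w : V) : Prop :=
  ∃ e ∈ H.edges, v ∈ e ∧ w ∈ e

/-- `H` is connected: any two vertices are joined by a chain of pairwise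
intersecting edges (equivalently, by the reflexive-transitive closure of
sharing an edge). -/
def Connected (H : FinHypergraph V) : Prop :=
  ∀ v ∈ H.verts, ∀ w ∈ H.verts, Relation.ReflTransGen H.edgeRel v w

/-- `H` is a copy of `K_k^r`: it has `k` vertices and its edges are exactly
all `r`-subsets of its vertex set. -/
def IsCompleteCopy (H : FinHypergraph V) (k r : ℕ) : Prop :=
  H.verts.card = k ∧ H.edges = H.verts.powersetCard r

/-- `H` is a copy of the 5-cycle `C₅` (as a 2-uniform hypergraph). -/
def IsC5Copy (H : FinHypergraph V) : Prop :=
  ∃ f : Fin 5 → V, Function.Injective f ∧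
    H.verts = Finset.univ.image f ∧
    H.edges = Finset.univ.image (fun i : Fin 5 => ({f i, f (i + 1)} : Finset V))

end FinHypergraph

namespace FinHypergraph

variable {V : Type*} [DecidableEq V]

theorem mem_shadow_edges {H : FinHypergraph V} {s : ℕ} {A : Finset V} :
    A ∈ (H.shadow s).edges ↔ ∃ f ∈ H.edges, A ⊆ f ∧ A.card = s := by
  simp only [shadow, Finset.mem_biUnion, Finset.mem_powersetCard]

theorem powersetCard_subset_shadow_edges {H : FinHypergraph V} {f : Finset V}
    (hf : f ∈ H.edges) (s : ℕ) : f.powersetCard s ⊆ (H.shadow s).edges :=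
  fun _ hA => mem_shadow_edges.mpr ⟨f, hf, Finset.mem_powersetCard.mp hA⟩

end FinHypergraph

open FinHypergraph

theorem stmt3_general {V : Type*} [DecidableEq V] (s r : ℕ)
    (H : FinHypergraph V) (hH : H.IsUniform r) (e S : Finset V)
    (he : e ∈ (H.shadow s).edges)
    (huniq : ∀ S' : Finset V, S' ⊆ H.verts → S'.card = r →
      (∀ A ∈ S'.powersetCard s, A ∈ (H.shadow s).edges) → e ⊆ S' → S' = S) :
    S ∈ H.edges := by
  -- an edge `f` of `H` through `e` spans a copy of `K_r^s` in the shadow, which must be the unique one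
  obtain ⟨f, hf, hef, -⟩ := mem_shadow_edges.mp he
  have hfS : f = S :=
    huniq f (H.edge_sub f hf) (hH f hf) (fun _ hA => powersetCard_subset_shadow_edges hf s hA) hef
  exact hfS ▸ hf

/-- Lemma (iv): if `e` is an edge of `H^(s)` and `S` is the vertex set of the
unique `K_r^s`-copy of `H^(s)` having `e` among its edges, then `S ∈ E(H)`. -/
theorem stmt3 {V : Type*} [DecidableEq V] (s r : ℕ) (hs : 2 ≤ s) (hsr : s ≤ r)
    (H : FinHypergraph V) (hH : H.IsUniform r) (e S : Finset V)
    (he : e ∈ (H.shadow s).edges)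
    (hS : S ⊆ H.verts) (hScard : S.card = r)
    (hSclique : ∀ A ∈ S.powersetCard s, A ∈ (H.shadow s).edges)
    (heS : e ⊆ S)
    (huniq : ∀ S' : Finset V, S' ⊆ H.verts → S'.card = r →
      (∀ A ∈ S'.powersetCard s, A ∈ (H.shadow s).edges) → e ⊆ S' → S' = S) :
    S ∈ H.edges :=
  stmt3_general s r H hH e S he huniq
end
end

section
/- If 1 ≤ k < r and H is an r-uniform hypergraph, then γ(H) − k + 1 ≤ ι(H, K_k^r) ≤ γ(H), where γ(H) is the domination number of H and ι(H, K_k^r) is the minimum size of a K_k^r-isolating set of H. -/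
open scoped Classical

noncomputable section

open FinHypergraph

/-! Since `k < r`, the hypergraph `K_k^r` has no edges, so `D` is `K_k^r`-isolating exactly when
fewer than `k` vertices lie outside `N_H[D]`. Hence every dominating set is isolating, and adding
the fewer than `k` undominated vertices to a minimum isolating set gives a dominating set. -/

namespace FinHypergraph

variable {V : Type*} (H : FinHypergraph V)

theorem hasCliqueCopy_iff_le_card {k r : ℕ} (hkr : k < r) :
    H.HasCliqueCopy k r ↔ k ≤ H.verts.card := by
  constructor
  · rintro ⟨S, hS, rfl, -⟩
    exact Finset.card_le_card hS
  · intro h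
    obtain ⟨S, hS, rfl⟩ := Finset.exists_subset_card_eq h
    refine ⟨S, hS, rfl, fun A hA => ?_⟩
    rw [Finset.powersetCard_eq_empty.mpr hkr] at hA
    exact absurd hA (Finset.notMem_empty A)

variable [DecidableEq V]

theorem subset_closedNbhd (D : Finset V) : D ⊆ H.closedNbhd D :=
  Finset.subset_union_left

theorem closedNbhd_mono {D D' : Finset V} (h : D ⊆ D') : H.closedNbhd D ⊆ H.closedNbhd D' := by
  refine Finset.union_subset_union h fun w hw => ?_
  simp only [Finset.mem_filter] at hw ⊢
  obtain ⟨hw, e, he, hwe, v, hv, hve⟩ := hw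
  exact ⟨hw, e, he, hwe, v, h hv, hve⟩

theorem isIsolating_iff {k r : ℕ} (hkr : k < r) {D : Finset V} :
    H.IsIsolating k r D ↔ D ⊆ H.verts ∧ (H.verts \ H.closedNbhd D).card < k := by
  rw [IsIsolating, hasCliqueCopy_iff_le_card _ hkr, not_le]
  rfl

variable {H} in
theorem IsDominating.isIsolating {k r : ℕ} (hk : 1 ≤ k) (hkr : k < r) {D : Finset V}
    (hD : H.IsDominating D) : H.IsIsolating k r D := by
  rw [isIsolating_iff H hkr, Finset.sdiff_eq_empty_iff_subset.mpr hD.2, Finset.card_empty]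
  exact ⟨hD.1, hk⟩

theorem isDominating_union_sdiff_closedNbhd {D : Finset V} (hD : D ⊆ H.verts) :
    H.IsDominating (D ∪ (H.verts \ H.closedNbhd D)) := by
  refine ⟨Finset.union_subset hD Finset.sdiff_subset, fun v hv => ?_⟩
  by_cases hvN : v ∈ H.closedNbhd D
  · exact H.closedNbhd_mono Finset.subset_union_left hvN
  · exact H.subset_closedNbhd _ (Finset.mem_union_right _ (Finset.mem_sdiff.mpr ⟨hv, hvN⟩))

theorem domNum_le_card {D : Finset V} (hD : H.IsDominating D) : H.domNum ≤ D.card :=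
  Nat.sInf_le ⟨D, hD, rfl⟩

theorem exists_isDominating_card_eq_domNum :
    ∃ D : Finset V, H.IsDominating D ∧ D.card = H.domNum :=
  Nat.sInf_mem (s := {n | ∃ D : Finset V, H.IsDominating D ∧ D.card = n})
    ⟨_, H.verts, ⟨subset_rfl, H.subset_closedNbhd _⟩, rfl⟩

theorem iso_le_card {k r : ℕ} {D : Finset V} (hD : H.IsIsolating k r D) : H.iso k r ≤ D.card :=
  Nat.sInf_le ⟨D, hD, rfl⟩

theorem exists_isIsolating_card_eq_iso {k r : ℕ} (hk : 1 ≤ k) (hkr : k < r) :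
    ∃ D : Finset V, H.IsIsolating k r D ∧ D.card = H.iso k r := by
  obtain ⟨D, hD, -⟩ := H.exists_isDominating_card_eq_domNum
  exact Nat.sInf_mem (s := {n | ∃ D : Finset V, H.IsIsolating k r D ∧ D.card = n})
    ⟨_, D, hD.isIsolating hk hkr, rfl⟩

theorem iso_le_domNum {k r : ℕ} (hk : 1 ≤ k) (hkr : k < r) : H.iso k r ≤ H.domNum := by
  obtain ⟨D, hD, hDcard⟩ := H.exists_isDominating_card_eq_domNum
  exact hDcard ▸ H.iso_le_card (hD.isIsolating hk hkr)

theorem domNum_lt_iso_add {k r : ℕ} (hk : 1 ≤ k) (hkr : k < r) : H.domNum < H.iso k r + k := by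
  obtain ⟨D, hD, hDcard⟩ := H.exists_isIsolating_card_eq_iso hk hkr
  rw [isIsolating_iff H hkr] at hD
  calc H.domNum ≤ (D ∪ (H.verts \ H.closedNbhd D)).card :=
        H.domNum_le_card (H.isDominating_union_sdiff_closedNbhd hD.1)
    _ ≤ D.card + (H.verts \ H.closedNbhd D).card := Finset.card_union_le _ _
    _ < H.iso k r + k := hDcard ▸ Nat.add_lt_add_left hD.2 _

end FinHypergraph

theorem stmt8_general {V : Type*} [DecidableEq V] (r k : ℕ) (hk : 1 ≤ k) (hkr : k < r)
    (H : FinHypergraph V) :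
    (H.domNum : ℤ) - k + 1 ≤ (H.iso k r : ℤ) ∧ H.iso k r ≤ H.domNum := by
  have hlower := H.domNum_lt_iso_add hk hkr
  exact ⟨by omega, H.iso_le_domNum hk hkr⟩

/-- For `1 ≤ k < r` and an `r`-graph `H`: `γ(H) − k + 1 ≤ ι(H, K_k^r) ≤ γ(H)`. -/
theorem stmt8 {V : Type*} [DecidableEq V] (r k : ℕ) (hk : 1 ≤ k) (hkr : k < r)
    (H : FinHypergraph V) (hH : H.IsUniform r) :
    (H.domNum : ℤ) - k + 1 ≤ (H.iso k r : ℤ) ∧ H.iso k r ≤ H.domNum :=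
  stmt8_general r k hk hkr H
end
end

section
/- For every q ≥ 1 and 1 ≤ k < r, there exists a connected r-uniform hypergraph H with ι(H, K_k^r) = γ(H) = q, so the upper bound ι(H, K_k^r) ≤ γ(H) is tight. -/
open scoped Classical

noncomputable section

/-- A (finite) hypergraph: a finite vertex set together with a finite
set of edges, each edge being a subset of the vertex set. -/
structure Hypergraph' (V : Type*) where
  verts : Finset V
  edges : Finset (Finset V)
  edge_sub : ∀ e ∈ edges, e ⊆ verts

namespace Hypergraph'

variable {V : Type*} [DecidableEq V]

/-- `H` is `r`-uniform if every edge has exactly `r` vertices. -/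
def IsUniform (H : Hypergraph' V) (r : ℕ) : Prop :=
  ∀ e ∈ H.edges, e.card = r

/-- The closed neighbourhood `N_H[D]` of a set `D` of vertices. -/
def closedNbhd (H : Hypergraph' V) (D : Finset V) : Finset V :=
  D ∪ H.verts.filter (fun w => ∃ e ∈ H.edges, w ∈ e ∧ ∃ v ∈ D, v ∈ e)

/-- The `s`-th shadow hypergraph `H^(s)`: same vertices, edges are all
`s`-element subsets of edges of `H`. -/
def shadow (H : Hypergraph' V) (s : ℕ) : Hypergraph' V where
  verts := H.verts
  edges := H.edges.biUnion (fun e => e.powersetCard s)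
  edge_sub := by
    intro a ha
    rw [Finset.mem_biUnion] at ha
    obtain ⟨e, he, hae⟩ := ha
    exact (Finset.mem_powersetCard.mp hae).1.trans (H.edge_sub e he)

/-- The subhypergraph of `H` induced by a vertex set `X`. -/
def induce (H : Hypergraph' V) (X : Finset V) : Hypergraph' V where
  verts := X
  edges := H.edges.filter (fun e => e ⊆ X)
  edge_sub := fun _ he => (Finset.mem_filter.mp he).2

/-- `H` contains a copy of `K_k^r`, the complete `r`-uniform hypergraph on
`k` vertices: a `k`-set of vertices all of whose `r`-subsets are edges. -/
def HasCliqueCopy (H : Hypergraph' V) (k r : ℕ) : Prop :=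
  ∃ S : Finset V, S ⊆ H.verts ∧ S.card = k ∧ ∀ A ∈ S.powersetCard r, A ∈ H.edges

/-- `D` is a `K_k^r`-isolating set of `H`: deleting `N_H[D]` leaves no copy of `K_k^r`. -/
def IsIsolating (H : Hypergraph' V) (k r : ℕ) (D : Finset V) : Prop :=
  D ⊆ H.verts ∧ ¬ (H.induce (H.verts \ H.closedNbhd D)).HasCliqueCopy k r

/-- `ι(H, K_k^r)`: the minimum size of a `K_k^r`-isolating set of `H`. -/
def iso (H : Hypergraph' V) (k r : ℕ) : ℕ :=
  sInf {n | ∃ D : Finset V, H.IsIsolating k r D ∧ D.card = n}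

/-- `D` is a dominating set of `H`. -/
def IsDominating (H : Hypergraph' V) (D : Finset V) : Prop :=
  D ⊆ H.verts ∧ H.verts ⊆ H.closedNbhd D

/-- The domination number `γ(H)`. -/
def domNum (H : Hypergraph' V) : ℕ :=
  sInf {n | ∃ D : Finset V, H.IsDominating D ∧ D.card = n}

/-- Two vertices are related if they lie in a common edge. -/
def edgeRel (H : Hypergraph' V) (v w : V) : Prop :=
  ∃ e ∈ H.edges, v ∈ e ∧ w ∈ e

/-- `H` is connected: any two vertices are joined by a chain of pairwise
intersecting edges (equivalently, by the reflexive-transitive closure of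
sharing an edge). -/
def Connected (H : Hypergraph' V) : Prop :=
  ∀ v ∈ H.verts, ∀ w ∈ H.verts, Relation.ReflTransGen H.edgeRel v w

/-- `H` is a copy of `K_k^r`: it has `k` vertices and its edges are exactly
all `r`-subsets of its vertex set. -/
def IsCompleteCopy (H : Hypergraph' V) (k r : ℕ) : Prop :=
  H.verts.card = k ∧ H.edges = H.verts.powersetCard r

/-- `H` is a copy of the 5-cycle `C₅` (as a 2-uniform hypergraph). -/
def IsC5Copy (H : Hypergraph' V) : Prop :=
  ∃ f : Fin 5 → V, Function.Injective f ∧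
    H.verts = Finset.univ.image f ∧
    H.edges = Finset.univ.image (fun i : Fin 5 => ({f i, f (i + 1)} : Finset V))

end Hypergraph'

open Hypergraph'

/-! Take `q` disjoint copies of `K_{r+1}^r` and join one vertex of each, its hub, to the hub of
the first copy by further edges through `r - 2` common extra vertices. The hubs dominate
everything, so `γ ≤ q`. Conversely, only edges inside a block touch its `r ≥ k` non-hub vertices,
so a set missing a block leaves them undominated and is not even `K_k^r`-isolating: `ι ≥ q`.
Finally `γ(H) = ι(H, K_1^r)`. -/

open Finset

namespace Hypergraph'

section

variable {V : Type*} (H : Hypergraph' V)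

instance : Std.Symm H.edgeRel := ⟨fun _ _ ⟨e, he, hv, hw⟩ => ⟨e, he, hw, hv⟩⟩

lemma connected_of_forall_reflTransGen (c : V)
    (h : ∀ v ∈ H.verts, Relation.ReflTransGen H.edgeRel c v) : H.Connected := fun v hv w hw =>
  (Std.Symm.symm _ _ (h v hv)).trans (h w hw)

end

variable {V : Type*} [DecidableEq V] (H : Hypergraph' V)

lemma mem_closedNbhd_of_edgeRel {D : Finset V} {d w : V} (hd : d ∈ D) (hdw : H.edgeRel d w) :
    w ∈ H.closedNbhd D := by
  obtain ⟨e, he, hde, hwe⟩ := hdw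
  exact mem_union_right _ (mem_filter.mpr ⟨H.edge_sub e he hwe, e, he, hwe, d, hd, hde⟩)

/-- Since `k < r`, a copy of `K_k^r` is just any `k`-set of vertices. -/
lemma isIsolating_iff_card_lt {k r : ℕ} (hkr : k < r) {D : Finset V} :
    H.IsIsolating k r D ↔ D ⊆ H.verts ∧ #(H.verts \ H.closedNbhd D) < k := by
  refine and_congr_right fun _ => ?_
  constructor
  · intro hno
    by_contra! hk
    obtain ⟨S, hS, hSk⟩ := exists_subset_card_eq hk
    refine hno ⟨S, hS, hSk, fun A hA => ?_⟩
    obtain ⟨hAS, hAr⟩ := mem_powersetCard.mp hA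
    have := card_le_card hAS
    omega
  · rintro hk ⟨S, hS, hSk, -⟩
    have : #S ≤ #(H.verts \ H.closedNbhd D) := card_le_card hS
    omega

lemma isDominating_iff_isIsolating {r : ℕ} (hr : 1 < r) {D : Finset V} :
    H.IsDominating D ↔ H.IsIsolating 1 r D := by
  rw [H.isIsolating_iff_card_lt hr, IsDominating, Nat.lt_one_iff, card_eq_zero,
    sdiff_eq_empty_iff_subset]

lemma domNum_eq_iso {r : ℕ} (hr : 1 < r) : H.domNum = H.iso 1 r := by
  simp only [domNum, iso, H.isDominating_iff_isIsolating hr]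

lemma iso_eq_of_isIsolating {k r : ℕ} {D : Finset V} (hD : H.IsIsolating k r D)
    (hmin : ∀ D', H.IsIsolating k r D' → #D ≤ #D') : H.iso k r = #D :=
  IsLeast.csInf_eq ⟨⟨D, hD, rfl⟩, by rintro _ ⟨D', hD', rfl⟩; exact hmin D' hD'⟩

lemma subset_sdiff_closedNbhd {F G D : Finset V} (hF : F ⊆ H.verts) (hFG : F ⊆ G)
    (hedges : ∀ e ∈ H.edges, ¬ Disjoint e F → e ⊆ G) (hDG : Disjoint D G) :
    F ⊆ H.verts \ H.closedNbhd D := by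
  intro w hw
  refine mem_sdiff.mpr ⟨hF hw, fun hN => ?_⟩
  rcases mem_union.mp hN with hwD | hwN
  · exact disjoint_left.mp hDG hwD (hFG hw)
  · obtain ⟨-, e, he, hwe, d, hd, hde⟩ := mem_filter.mp hwN
    exact disjoint_left.mp hDG hd (hedges e he (not_disjoint_iff.mpr ⟨w, hwe, hw⟩) hde)

/-- An isolating set meets every block `G i`, since otherwise the `≥ k` vertices of `F i` stay
undominated. -/
lemma card_le_card_of_isIsolating {ι : Type*} {s : Finset ι} {G F : ι → Finset V}
    (hG : (s : Set ι).PairwiseDisjoint G) (hF : ∀ i ∈ s, F i ⊆ H.verts) (hFG : ∀ i ∈ s, F i ⊆ G i)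
    (hedges : ∀ i ∈ s, ∀ e ∈ H.edges, ¬ Disjoint e (F i) → e ⊆ G i)
    {k r : ℕ} (hk : ∀ i ∈ s, k ≤ #(F i)) (hkr : k < r) {D : Finset V}
    (hD : H.IsIsolating k r D) : #s ≤ #D := by
  have hmeet : ∀ i ∈ s, (D ∩ G i).Nonempty := by
    intro i hi
    by_contra hempty
    have hsub := H.subset_sdiff_closedNbhd (hF i hi) (hFG i hi) (hedges i hi)
      (disjoint_iff_inter_eq_empty.mpr (not_nonempty_iff_eq_empty.mp hempty))
    have := (card_le_card hsub).trans_lt ((H.isIsolating_iff_card_lt hkr).mp hD).2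
    exact absurd (hk i hi) (by omega)
  calc #s ≤ #(s.biUnion fun i => D ∩ G i) :=
        card_le_card_biUnion (hG.mono fun _ => inter_subset_right) hmeet
    _ ≤ #D := card_le_card (biUnion_subset.mpr fun _ _ => inter_subset_left)

end Hypergraph'

namespace CliqueStar

/-- Vertex `(i, j)` of the construction is the natural number `Nat.pair i j`. -/
def cells (s : Finset (ℕ × ℕ)) : Finset ℕ := s.map Nat.pairEquiv.toEmbedding

lemma mem_cells {s : Finset (ℕ × ℕ)} {x : ℕ} : x ∈ cells s ↔ x.unpair ∈ s := mem_map_equiv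

lemma pair_mem_cells {s : Finset (ℕ × ℕ)} {a b : ℕ} : Nat.pair a b ∈ cells s ↔ (a, b) ∈ s := by
  rw [mem_cells, Nat.unpair_pair]

lemma card_cells (s : Finset (ℕ × ℕ)) : #(cells s) = #s := card_map _

def hub (i : ℕ) : ℕ := Nat.pair i 0

variable (q r : ℕ)

def block (i : ℕ) : Finset ℕ := cells ({i} ×ˢ range (r + 1))

def leaves (i : ℕ) : Finset ℕ := cells ({i} ×ˢ Ioc 0 r)

def link (i : ℕ) : Finset ℕ := cells (insert (0, 0) (insert (i, 0) ({q} ×ˢ range (r - 2))))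

/-- Block `i` is `{v_i} ∪ V(F_i)` with hub `v_i = (i, 0)` and leaves `V(F_i)`, and carries all its
`r`-subsets. The link edges `{v_0, v_i} ∪ {(q, j) | j < r - 2}` make the hypergraph connected. -/
def edgeSet : Finset (Finset ℕ) :=
  (range q).biUnion (fun i => (block r i).powersetCard r) ∪ (Ioo 0 q).image (link q r)

def hypergraph : Hypergraph' ℕ where
  verts := (edgeSet q r).sup id
  edges := edgeSet q r
  edge_sub _ he := le_sup (f := id) he

variable {q r}

lemma mem_edgeSet {e : Finset ℕ} :
    e ∈ edgeSet q r ↔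
      (∃ i < q, e ⊆ block r i ∧ #e = r) ∨ ∃ i, (0 < i ∧ i < q) ∧ link q r i = e := by
  simp only [edgeSet, mem_union, mem_biUnion, mem_range, mem_powersetCard, mem_image, mem_Ioo]

lemma mem_verts {w : ℕ} : w ∈ (hypergraph q r).verts ↔ ∃ e ∈ edgeSet q r, w ∈ e := by
  simp only [hypergraph, mem_sup, id]

lemma card_link (hr : 2 ≤ r) {i : ℕ} (hi : 0 < i ∧ i < q) : #(link q r i) = r := by
  rw [link, card_cells, card_insert_of_notMem, card_insert_of_notMem] <;>
    simp <;> omega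

lemma isUniform (hr : 2 ≤ r) : (hypergraph q r).IsUniform r := by
  intro e he
  rcases mem_edgeSet.mp he with ⟨i, -, -, he⟩ | ⟨i, hi, rfl⟩
  · exact he
  · exact card_link hr hi

lemma card_block (i : ℕ) : #(block r i) = r + 1 := by
  simp [block, card_cells]

lemma card_leaves (i : ℕ) : #(leaves r i) = r := by
  simp [leaves, card_cells]

lemma hub_mem_block (i : ℕ) : hub i ∈ block r i := by
  simp [hub, block, pair_mem_cells]

lemma leaves_subset_block (i : ℕ) : leaves r i ⊆ block r i := by
  intro w
  simp only [leaves, block, mem_cells, mem_product, mem_singleton, mem_Ioc, mem_range]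
  omega

lemma hub_mem_link (i : ℕ) : hub 0 ∈ link q r i := by
  simp [hub, link, pair_mem_cells]

lemma exists_mem_edgeSet_block {i : ℕ} (hi : i < q) {s : Finset ℕ} (hs : s ⊆ block r i)
    (hsr : #s ≤ r) : ∃ e ∈ edgeSet q r, s ⊆ e := by
  obtain ⟨e, hse, heb, he⟩ := exists_subsuperset_card_eq hs hsr (by rw [card_block]; omega)
  exact ⟨e, mem_edgeSet.mpr (Or.inl ⟨i, hi, heb, he⟩), hse⟩

lemma block_subset_verts (hr : 1 ≤ r) {i : ℕ} (hi : i < q) :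
    block r i ⊆ (hypergraph q r).verts := by
  intro w hw
  obtain ⟨e, he, hwe⟩ := exists_mem_edgeSet_block hi (singleton_subset_iff.mpr hw) (by simpa)
  exact mem_verts.mpr ⟨e, he, singleton_subset_iff.mp hwe⟩

lemma exists_edgeRel_hub (hr : 2 ≤ r) {w : ℕ} (hw : w ∈ (hypergraph q r).verts) :
    ∃ i < q, (hypergraph q r).edgeRel (hub i) w := by
  obtain ⟨e, he, hwe⟩ := mem_verts.mp hw
  rcases mem_edgeSet.mp he with ⟨i, hi, heb, -⟩ | ⟨i, hi, rfl⟩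
  · obtain ⟨e', he', hsub⟩ := exists_mem_edgeSet_block hi
      (insert_subset (hub_mem_block i) (singleton_subset_iff.mpr (heb hwe)))
      (card_le_two.trans hr)
    exact ⟨i, hi, e', he', hsub (mem_insert_self _ _),
      hsub (mem_insert_of_mem (mem_singleton_self _))⟩
  · exact ⟨0, by omega, link q r i, he, hub_mem_link i, hwe⟩

lemma reflTransGen_hub {i : ℕ} (hi : i < q) :
    Relation.ReflTransGen (hypergraph q r).edgeRel (hub 0) (hub i) := by
  rcases Nat.eq_zero_or_pos i with rfl | hpos
  · exact .refl
  · refine .single ⟨link q r i, mem_edgeSet.mpr (Or.inr ⟨i, ⟨hpos, hi⟩, rfl⟩), hub_mem_link i, ?_⟩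
    simp [hub, link, pair_mem_cells]

lemma connected (hr : 2 ≤ r) : (hypergraph q r).Connected := by
  refine (hypergraph q r).connected_of_forall_reflTransGen (hub 0) fun w hw => ?_
  obtain ⟨i, hi, hiw⟩ := exists_edgeRel_hub hr hw
  exact (reflTransGen_hub hi).tail hiw

def hubs (q : ℕ) : Finset ℕ := (range q).image hub

lemma card_hubs : #(hubs q) = q := by
  rw [hubs, card_image_of_injective _ fun a b h => by simpa [hub] using h, card_range]

lemma isDominating_hubs (hr : 2 ≤ r) : (hypergraph q r).IsDominating (hubs q) := by
  refine ⟨fun d hd => ?_, fun w hw => ?_⟩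
  · obtain ⟨i, hi, rfl⟩ := mem_image.mp hd
    exact block_subset_verts (by omega) (mem_range.mp hi) (hub_mem_block i)
  · obtain ⟨i, hi, hiw⟩ := exists_edgeRel_hub hr hw
    exact (hypergraph q r).mem_closedNbhd_of_edgeRel (mem_image_of_mem _ (mem_range.mpr hi)) hiw

lemma pairwiseDisjoint_block (s : Set ℕ) : s.PairwiseDisjoint (block r) := by
  intro i _ j _ hij
  refine disjoint_left.mpr fun w hwi hwj => hij ?_
  simp only [block, mem_cells, mem_product, mem_singleton] at hwi hwj
  exact hwi.1.symm.trans hwj.1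

lemma subset_block_of_not_disjoint_leaves {i : ℕ} (hi : i < q) {e : Finset ℕ}
    (he : e ∈ edgeSet q r) (hmeet : ¬ Disjoint e (leaves r i)) : e ⊆ block r i := by
  obtain ⟨w, hwe, hwl⟩ := not_disjoint_iff.mp hmeet
  rcases mem_edgeSet.mp he with ⟨j, -, hej, -⟩ | ⟨j, -, rfl⟩
  · obtain rfl : j = i := by
      by_contra hji
      exact disjoint_left.mp (pairwiseDisjoint_block Set.univ trivial trivial hji) (hej hwe)
        (leaves_subset_block i hwl)
    exact hej
  · simp only [link, leaves, mem_cells, mem_insert, mem_product, mem_singleton, mem_range,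
      mem_Ioc] at hwe hwl
    rcases hwe with h | h | h <;> simp only [h] at hwl <;> omega

lemma iso_eq {k : ℕ} (hk : 1 ≤ k) (hkr : k < r) : (hypergraph q r).iso k r = q := by
  have hr : 2 ≤ r := by omega
  have hiso : (hypergraph q r).IsIsolating k r (hubs q) := by
    refine ((hypergraph q r).isIsolating_iff_card_lt hkr).mpr ⟨(isDominating_hubs hr).1, ?_⟩
    rw [sdiff_eq_empty_iff_subset.mpr (isDominating_hubs hr).2, card_empty]
    omega
  rw [(hypergraph q r).iso_eq_of_isIsolating hiso, card_hubs]
  intro D hD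
  rw [card_hubs, ← card_range q]
  refine (hypergraph q r).card_le_card_of_isIsolating (pairwiseDisjoint_block _)
    (fun i hi => (leaves_subset_block i).trans (block_subset_verts (by omega) (mem_range.mp hi)))
    (fun i _ => leaves_subset_block i)
    (fun i hi _ he => subset_block_of_not_disjoint_leaves (mem_range.mp hi) he)
    (fun i _ => hkr.le.trans (card_leaves i).ge) hkr hD

end CliqueStar

theorem stmt10_general (q r k : ℕ) (hk : 1 ≤ k) (hkr : k < r) :
    ∃ H : Hypergraph' ℕ, H.Connected ∧ H.IsUniform r ∧
      H.iso k r = q ∧ H.domNum = q := by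
  have hr : 2 ≤ r := by omega
  refine ⟨CliqueStar.hypergraph q r, CliqueStar.connected hr, CliqueStar.isUniform hr,
    CliqueStar.iso_eq hk hkr, ?_⟩
  rw [domNum_eq_iso _ (by omega : 1 < r), CliqueStar.iso_eq le_rfl (by omega)]

/-- For every `q ≥ 1` and `1 ≤ k < r` there is a connected `r`-graph `H` with
`ι(H, K_k^r) = γ(H) = q`; the bound `ι ≤ γ` is tight. -/
theorem stmt10 (q r k : ℕ) (hq : 1 ≤ q) (hk : 1 ≤ k) (hkr : k < r) :
    ∃ H : Hypergraph' ℕ, H.Connected ∧ H.IsUniform r ∧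
      H.iso k r = q ∧ H.domNum = q :=
  stmt10_general q r k hk hkr
end
end

section
/- Let H = H_4^4 be the 4-uniform hypergraph on vertex set {a_1,...,a_10} with edges e_1 = {a_1,a_2,a_5,a_6}, e_2 = {a_1,a_6,a_7,a_10}, e_3 = {a_2,a_3,a_4,a_5}, e_4 = {a_3,a_4,a_8,a_9}, e_5 = {a_7,a_8,a_9,a_10}. Then H is connected and ι(H, K_4^4) = 2 = 10/5, so H attains the bound ι(H, K_k^r) ≤ n/(k+1) with k = r = 4 and n = 10. -/
/-!
All edges of `H₄⁴` have four vertices, so the only copies of `K₄⁴` are the edges themselves and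
`D` is isolating exactly when every edge meets `N[D]`. The closed neighbourhood of `{a₁, a₈}` is
the whole vertex set, while the closed neighbourhood of any single vertex misses an edge; both
are finite checks. Connectivity: `e₁` and `e₂` contain `a₁`, `e₃` meets `e₁` in `a₂`, `e₅` meets
`e₂` in `a₇`, and these four edges cover all vertices.
-/

open scoped Classical

noncomputable section

open FinHypergraph

/-- The 4-uniform hypergraph `H₄⁴` on vertices `{1, …, 10}`. -/
def H44 : FinHypergraph ℕ where
  verts := Finset.Icc 1 10
  edges := {{1,2,5,6},{1,6,7,10},{2,3,4,5},{3,4,8,9},{7,8,9,10}}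
  edge_sub := by decide

namespace FinHypergraph

variable {V : Type*} {H : FinHypergraph V}

instance : Std.Symm H.edgeRel where
  symm _ _ := fun ⟨e, he, hv, hw⟩ => ⟨e, he, hw, hv⟩

lemma reflTransGen_edgeRel_of_mem_edge {u x : V} {e : Finset V} (he : e ∈ H.edges) (hx : x ∈ e)
    (hux : Relation.ReflTransGen H.edgeRel u x) : ∀ w ∈ e, Relation.ReflTransGen H.edgeRel u w :=
  fun _ hw => hux.tail ⟨e, he, hx, hw⟩

lemma connected_of_forall_reflTransGen (u : V)
    (hu : ∀ v ∈ H.verts, Relation.ReflTransGen H.edgeRel u v) : H.Connected :=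
  fun v hv w hw => (symm_of _ (hu v hv)).trans (hu w hw)

lemma IsUniform.hasCliqueCopy_self_iff {r : ℕ} (hH : H.IsUniform r) :
    H.HasCliqueCopy r r ↔ H.edges.Nonempty := by
  constructor
  · rintro ⟨S, -, hS, hedges⟩
    exact ⟨S, hedges S (Finset.mem_powersetCard.mpr ⟨subset_rfl, hS⟩)⟩
  · rintro ⟨e, he⟩
    refine ⟨e, H.edge_sub e he, hH e he, fun A hA => ?_⟩
    rw [← hH e he, Finset.powersetCard_self, Finset.mem_singleton] at hA
    rwa [hA]

variable [DecidableEq V]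

lemma IsUniform.induce {r : ℕ} (hH : H.IsUniform r) (X : Finset V) : (H.induce X).IsUniform r :=
  fun e he => hH e (Finset.mem_filter.mp he).1

lemma IsUniform.isIsolating_iff {r : ℕ} (hH : H.IsUniform r) {D : Finset V} :
    H.IsIsolating r r D ↔ D ⊆ H.verts ∧ ∀ e ∈ H.edges, ¬ e ⊆ H.verts \ H.closedNbhd D := by
  dsimp only [IsIsolating]
  rw [(hH.induce _).hasCliqueCopy_self_iff]
  exact and_congr_right' <|
    (not_congr Finset.filter_nonempty_iff).trans (by simp only [not_exists, not_and])

lemma iso_eq_of_isIsolating {k r n : ℕ} {D : Finset V} (hD : H.IsIsolating k r D)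
    (hcard : D.card = n) (hmin : ∀ D', H.IsIsolating k r D' → n ≤ D'.card) : H.iso k r = n :=
  le_antisymm (Nat.sInf_le ⟨D, hD, hcard⟩)
    (le_csInf ⟨n, D, hD, hcard⟩ fun _ ⟨D', hD', hD'card⟩ => hD'card ▸ hmin D' hD')

end FinHypergraph

lemma isUniform_H44 : H44.IsUniform 4 := by
  unfold IsUniform
  decide

lemma connected_H44 : H44.Connected := by
  have reach₁ : ∀ w ∈ ({1, 2, 5, 6} : Finset ℕ), Relation.ReflTransGen H44.edgeRel 1 w :=
    reflTransGen_edgeRel_of_mem_edge (by decide) (by decide) .refl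
  have reach₂ : ∀ w ∈ ({1, 6, 7, 10} : Finset ℕ), Relation.ReflTransGen H44.edgeRel 1 w :=
    reflTransGen_edgeRel_of_mem_edge (by decide) (by decide) .refl
  have reach₃ : ∀ w ∈ ({2, 3, 4, 5} : Finset ℕ), Relation.ReflTransGen H44.edgeRel 1 w :=
    reflTransGen_edgeRel_of_mem_edge (by decide) (by decide) (reach₁ 2 (by decide))
  have reach₅ : ∀ w ∈ ({7, 8, 9, 10} : Finset ℕ), Relation.ReflTransGen H44.edgeRel 1 w :=
    reflTransGen_edgeRel_of_mem_edge (by decide) (by decide) (reach₂ 7 (by decide))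
  have hcover : ∀ v ∈ H44.verts,
      v ∈ ({1, 2, 5, 6} ∪ {1, 6, 7, 10} ∪ {2, 3, 4, 5} ∪ {7, 8, 9, 10} : Finset ℕ) := by
    decide
  refine connected_of_forall_reflTransGen 1 fun v hv => ?_
  simp only [Finset.mem_union] at hcover
  obtain ((h | h) | h) | h := hcover v hv
  exacts [reach₁ v h, reach₂ v h, reach₃ v h, reach₅ v h]

lemma isIsolating_H44_one_eight : H44.IsIsolating 4 4 {1, 8} :=
  isUniform_H44.isIsolating_iff.mpr (by decide)

lemma exists_edge_subset_compl_closedNbhd_singleton_H44 :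
    ∀ v ∈ H44.verts, ∃ e ∈ H44.edges, e ⊆ H44.verts \ H44.closedNbhd {v} := by
  decide

lemma two_le_card_of_isIsolating_H44 {D : Finset ℕ} (hD : H44.IsIsolating 4 4 D) :
    2 ≤ D.card := by
  by_contra! hlt
  obtain ⟨x, hx⟩ := Finset.card_le_one_iff_subset_singleton.mp (Nat.le_of_lt_succ hlt)
  obtain ⟨hDverts, hDmeets⟩ := isUniform_H44.isIsolating_iff.mp hD
  rcases Finset.subset_singleton_iff.mp hx with rfl | rfl
  · exact hDmeets {1, 2, 5, 6} (by decide) (by decide)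
  · obtain ⟨e, he, hsub⟩ := exists_edge_subset_compl_closedNbhd_singleton_H44 x
      (hDverts (Finset.mem_singleton_self x))
    exact hDmeets e he hsub

/-- `H₄⁴` is connected, has 10 vertices, and `ι(H₄⁴, K₄⁴) = 2 = 10/5`, attaining
the bound `ι(H, K_k^r) ≤ n/(k+1)` with `k = r = 4`, `n = 10`. -/
theorem stmt18 :
    H44.Connected ∧ H44.verts.card = 10 ∧ H44.iso 4 4 = 2 :=
  ⟨connected_H44, rfl, iso_eq_of_isIsolating isIsolating_H44_one_eight rfl
    fun _ => two_le_card_of_isIsolating_H44⟩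
end
end
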